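/- For even n = 2k with k ≥ 3, the n-th constrained quantization error for the uniform distribution on [0,2] with constraint S₁ ∪ S₂ is Vₙ = (1/48)(12 + 1/k²) = 1/4 + 1/(48k²). -/

import Mathlib

open scoped Classical

/-- Distortion error of a finite set w.r.t. the uniform distribution on the base `[0,2]`,
using the squared Euclidean distance `rho((x,0),(a,b)) = (x-a)^2 + b^2`. -/
noncomputable def distortion (α : Finset (ℝ × ℝ)) : ℝ :=
  (1/2) * ∫ x in (0:ℝ)..2, sInf ((fun p : ℝ × ℝ => (x - p.1)^2 + p.2^2) '' (α : Set (ℝ × ℝ)))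

/-- The side `OB` of the equilateral triangle `O(0,0)`, `A(2,0)`, `B(1,√3)`. -/
def S1 : Set (ℝ × ℝ) := {p | ∃ x : ℝ, 0 ≤ x ∧ x ≤ 1 ∧ p = (x, Real.sqrt 3 * x)}

/-- The side `AB` of the equilateral triangle. -/
def S2 : Set (ℝ × ℝ) := {p | ∃ x : ℝ, 1 ≤ x ∧ x ≤ 2 ∧ p = (x, -(Real.sqrt 3) * (x - 2))}

/-- The `n`-th constrained quantization error with constraint `S1 ∪ S2`. -/
noncomputable def V (n : ℕ) : ℝ :=
  sInf {v | ∃ α : Finset (ℝ × ℝ), ↑α ⊆ S1 ∪ S2 ∧ 1 ≤ α.card ∧ α.card ≤ n ∧ v = distortion α}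

/-!
On `S1` the squared distance from `(x, 0)` to `(t, √3 t)` is `¾ x² + ¼ (x - 4t)²`, and on `S2`
the one to `(s, -√3 (s - 2))` is `¾ (2 - x)² + ¼ (x - (4s - 6))²`. So for an admissible `α` the
integrand is at least `¾ min(x, 2 - x)² + ¼ d(x, Z)²`, where `Z ⊆ ℝ` collects the numbers `4t`
and `4s - 6`, and the one-dimensional bound `∫_A^B d(x, Z)² ≥ (B - A)³ / (12 |Z|²)` (induction on
`|Z|`, splitting off the largest point at its Voronoi boundary) gives `Vₙ ≥ 1/4 + 1/(12 n²)`.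
For `n = 2k` this is attained: lift the midpoints of the `2k` cells of length `1/k` to the side
lying over their half of `[0, 2]`, where the two expressions above are equalities.
-/

open Finset intervalIntegral

theorem integral_sub_sq (a A B : ℝ) :
    ∫ x in A..B, (x - a) ^ 2 = ((B - a) ^ 3 - (A - a) ^ 3) / 3 := by
  rw [integral_comp_sub_right (fun x => x ^ 2), integral_pow]
  norm_num

theorem integral_sub_midpoint_sq (A B : ℝ) :
    ∫ x in A..B, (x - (A + B) / 2) ^ 2 = (B - A) ^ 3 / 12 := by
  rw [integral_sub_sq]
  ring

theorem cube_div_twelve_le_integral_sub_sq {A B : ℝ} (hAB : A ≤ B) (a : ℝ) :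
    (B - A) ^ 3 / 12 ≤ ∫ x in A..B, (x - a) ^ 2 := by
  rw [integral_sub_sq]
  nlinarith [mul_nonneg (sub_nonneg.2 hAB) (sq_nonneg (B + A - 2 * a))]

theorem add_cube_div_le {a b m : ℝ} (ha : 0 ≤ a) (hb : 0 ≤ b) (hm : 0 < m) :
    (a + b) ^ 3 / (12 * (m + 1) ^ 2) ≤ a ^ 3 / (12 * m ^ 2) + b ^ 3 / 12 := by
  rw [div_add_div _ _ (by positivity) (by positivity),
    div_le_div_iff₀ (by positivity) (by positivity)]
  nlinarith [mul_nonneg (sq_nonneg (a - m * b))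
    (by positivity : 0 ≤ (2 * m + 1) * a + (m ^ 2 + 2 * m) * b)]

theorem continuous_inf'_sub_sq (Z : Finset ℝ) (hZ : Z.Nonempty) :
    Continuous fun x => Z.inf' hZ fun z => (x - z) ^ 2 :=
  Continuous.finset_inf'_apply (f := fun z x => (x - z) ^ 2) hZ fun _ _ => by fun_prop

theorem cube_div_le_integral_inf'_sub_sq (Z : Finset ℝ) (hZ : Z.Nonempty) {A B : ℝ}
    (hAB : A ≤ B) :
    (B - A) ^ 3 / (12 * (#Z : ℝ) ^ 2) ≤ ∫ x in A..B, Z.inf' hZ fun z => (x - z) ^ 2 := by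
  induction Z using Finset.induction_on_max generalizing A B with
  | empty => exact absurd hZ Finset.not_nonempty_empty
  | insert a s has ih =>
    rcases s.eq_empty_or_nonempty with rfl | hs
    · simpa using cube_div_twelve_le_integral_sub_sq hAB a
    set M := s.max' hs
    set c := max A (min B ((M + a) / 2))
    have hAc : A ≤ c := le_max_left _ _
    have hcB : c ≤ B := max_le hAB (min_le_left _ _)
    have hMa : M ≤ a := (has M (s.max'_mem hs)).le
    have hF : ∀ x, ((insert a s).inf' hZ fun z => (x - z) ^ 2)
        = (x - a) ^ 2 ⊓ s.inf' hs fun z => (x - z) ^ 2 := fun x => inf'_insert hs _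
    -- left of the midpoint between `M` and `a`, the new point `a` is never the nearest one
    have hleft : ∀ x ∈ Set.Ioo A c, (s.inf' hs fun z => (x - z) ^ 2)
        ≤ (insert a s).inf' hZ fun z => (x - z) ^ 2 := by
      intro x hx
      have hxm : x ≤ (M + a) / 2 := by
        rcases max_cases A (min B ((M + a) / 2)) with ⟨h1, -⟩ | ⟨h1, -⟩ <;>
          linarith [hx.1, hx.2, min_le_right B ((M + a) / 2)]
      rw [hF]
      refine le_inf ((inf'_le _ (s.max'_mem hs)).trans ?_) le_rfl
      nlinarith
    have hright : ∀ x ∈ Set.Ioo c B, (x - a) ^ 2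
        ≤ (insert a s).inf' hZ fun z => (x - z) ^ 2 := by
      intro x hx
      have hmx : (M + a) / 2 ≤ x := by
        rcases min_cases B ((M + a) / 2) with ⟨h1, h2⟩ | ⟨h1, -⟩ <;>
          linarith [hx.1, hx.2, le_max_right A (min B ((M + a) / 2))]
      rw [hF]
      refine le_inf le_rfl (le_inf' hs _ fun z hz => ?_)
      have := s.le_max' z hz
      nlinarith [has z hz]
    have hcont := continuous_inf'_sub_sq _ hZ
    calc (B - A) ^ 3 / (12 * (#(insert a s) : ℝ) ^ 2)
        = ((c - A) + (B - c)) ^ 3 / (12 * ((#s : ℝ) + 1) ^ 2) := by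
          rw [card_insert_of_notMem fun h => lt_irrefl a (has a h)]
          push_cast
          ring_nf
      _ ≤ (c - A) ^ 3 / (12 * (#s : ℝ) ^ 2) + (B - c) ^ 3 / 12 :=
          add_cube_div_le (by linarith) (by linarith) (by exact_mod_cast hs.card_pos)
      _ ≤ (∫ x in A..c, s.inf' hs fun z => (x - z) ^ 2) + ∫ x in c..B, (x - a) ^ 2 :=
          add_le_add (ih hs hAc) (cube_div_twelve_le_integral_sub_sq hcB a)
      _ ≤ (∫ x in A..c, (insert a s).inf' hZ fun z => (x - z) ^ 2)
          + ∫ x in c..B, (insert a s).inf' hZ fun z => (x - z) ^ 2 :=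
          add_le_add
            (integral_mono_on_of_le_Ioo hAc ((continuous_inf'_sub_sq s hs).intervalIntegrable _ _)
              (hcont.intervalIntegrable _ _) hleft)
            (integral_mono_on_of_le_Ioo hcB (Continuous.intervalIntegrable (by fun_prop) _ _)
              (hcont.intervalIntegrable _ _) hright)
      _ = ∫ x in A..B, (insert a s).inf' hZ fun z => (x - z) ^ 2 :=
          integral_add_adjacent_intervals (hcont.intervalIntegrable _ _)
            (hcont.intervalIntegrable _ _)

theorem sq_dist_S1 (x t : ℝ) :
    (x - t) ^ 2 + (√3 * t) ^ 2 = 3 / 4 * x ^ 2 + 1 / 4 * (x - 4 * t) ^ 2 := by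
  rw [mul_pow, Real.sq_sqrt zero_le_three]
  ring

theorem sq_dist_S2 (x s : ℝ) :
    (x - s) ^ 2 + (-√3 * (s - 2)) ^ 2 = 3 / 4 * (2 - x) ^ 2 + 1 / 4 * (x - (4 * s - 6)) ^ 2 := by
  rw [mul_pow, neg_sq, Real.sq_sqrt zero_le_three]
  ring

/-- The coordinate on the base line that `sq_dist_S1` and `sq_dist_S2` attach to a point of
`S1 ∪ S2`. -/
noncomputable def baseCoord (p : ℝ × ℝ) : ℝ := if p ∈ S1 then 4 * p.1 else 4 * p.1 - 6

theorem le_sq_dist_of_mem {x : ℝ} (hx : x ∈ Set.Icc 0 2) {p : ℝ × ℝ} (hp : p ∈ S1 ∪ S2) :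
    3 / 4 * min x (2 - x) ^ 2 + 1 / 4 * (x - baseCoord p) ^ 2 ≤ (x - p.1) ^ 2 + p.2 ^ 2 := by
  have hw : 0 ≤ min x (2 - x) := le_min hx.1 (by linarith [hx.2])
  by_cases hp1 : p ∈ S1
  · obtain ⟨t, -, -, rfl⟩ := id hp1
    rw [baseCoord, if_pos hp1, sq_dist_S1]
    nlinarith [min_le_left x (2 - x)]
  · obtain ⟨s, -, -, rfl⟩ := hp.resolve_left hp1
    rw [baseCoord, if_neg hp1, sq_dist_S2]
    nlinarith [min_le_right x (2 - x)]

/-- A right inverse of `baseCoord` on `[0, 2]`. -/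
noncomputable def liftToSides (z : ℝ) : ℝ × ℝ :=
  if z ≤ 1 then (z / 4, √3 * (z / 4)) else ((z + 6) / 4, -√3 * ((z + 6) / 4 - 2))

theorem liftToSides_mem {z : ℝ} (hz : z ∈ Set.Icc 0 2) : liftToSides z ∈ S1 ∪ S2 := by
  unfold liftToSides
  split_ifs with h
  · exact Or.inl ⟨z / 4, by linarith [hz.1], by linarith, rfl⟩
  · exact Or.inr ⟨(z + 6) / 4, by linarith, by linarith [hz.2], rfl⟩

theorem sq_dist_liftToSides {x z : ℝ} (h : x ≤ 1 ∧ z ≤ 1 ∨ 1 ≤ x ∧ 1 < z) :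
    (x - (liftToSides z).1) ^ 2 + (liftToSides z).2 ^ 2
      = 3 / 4 * min x (2 - x) ^ 2 + 1 / 4 * (x - z) ^ 2 := by
  rcases h with ⟨hx, hz⟩ | ⟨hx, hz⟩
  · rw [liftToSides, if_pos hz, sq_dist_S1, min_eq_left (by linarith)]
    ring
  · rw [liftToSides, if_neg (not_le.2 hz), sq_dist_S2, min_eq_right (by linarith)]
    ring

theorem integral_min_sq : ∫ x in (0 : ℝ)..2, min x (2 - x) ^ 2 = 2 / 3 := by
  have hcont : Continuous fun x : ℝ => min x (2 - x) ^ 2 := by fun_prop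
  rw [← integral_add_adjacent_intervals (b := 1) (hcont.intervalIntegrable _ _)
    (hcont.intervalIntegrable _ _)]
  have h1 : ∫ x in (0 : ℝ)..1, min x (2 - x) ^ 2 = ∫ x in (0 : ℝ)..1, (x - 0) ^ 2 :=
    integral_congr fun x hx => by
      rw [Set.uIcc_of_le zero_le_one] at hx
      simp only [sub_zero, min_eq_left (by linarith [hx.2] : x ≤ 2 - x)]
  have h2 : ∫ x in (1 : ℝ)..2, min x (2 - x) ^ 2 = ∫ x in (1 : ℝ)..2, (x - 2) ^ 2 :=
    integral_congr fun x hx => by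
      rw [Set.uIcc_of_le one_le_two] at hx
      rw [min_eq_right (by linarith [hx.1] : 2 - x ≤ x)]
      ring
  rw [h1, h2, integral_sub_sq, integral_sub_sq]
  norm_num

theorem distortion_eq_integral_inf' {α : Finset (ℝ × ℝ)} (hα : α.Nonempty) :
    distortion α = 1 / 2 * ∫ x in (0 : ℝ)..2, α.inf' hα fun p => (x - p.1) ^ 2 + p.2 ^ 2 := by
  simp only [distortion, inf'_eq_csInf_image]

theorem continuous_inf'_sq_dist (α : Finset (ℝ × ℝ)) (hα : α.Nonempty) :
    Continuous fun x => α.inf' hα fun p => (x - p.1) ^ 2 + p.2 ^ 2 :=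
  Continuous.finset_inf'_apply (f := fun p x => (x - p.1) ^ 2 + p.2 ^ 2) hα fun _ _ => by fun_prop

theorem le_distortion {α : Finset (ℝ × ℝ)} (hα : ↑α ⊆ S1 ∪ S2) (hne : α.Nonempty) :
    1 / 4 + 1 / (12 * (#α : ℝ) ^ 2) ≤ distortion α := by
  set Z := α.image baseCoord
  have hZ : Z.Nonempty := hne.image _
  have hZpos : (0 : ℝ) < #Z := by exact_mod_cast hZ.card_pos
  have hZα : (#Z : ℝ) ≤ #α := by exact_mod_cast card_image_le
  have hw : Continuous fun x : ℝ => min x (2 - x) ^ 2 := by fun_prop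
  have hdZ := continuous_inf'_sub_sq Z hZ
  have hpt : ∀ x ∈ Set.Icc (0 : ℝ) 2,
      3 / 4 * min x (2 - x) ^ 2 + 1 / 4 * Z.inf' hZ (fun z => (x - z) ^ 2)
        ≤ α.inf' hne fun p => (x - p.1) ^ 2 + p.2 ^ 2 := by
    intro x hx
    refine le_inf' hne _ fun p hp => le_trans ?_ (le_sq_dist_of_mem hx (hα hp))
    gcongr
    exact inf'_le _ (mem_image_of_mem _ hp)
  calc 1 / 4 + 1 / (12 * (#α : ℝ) ^ 2)
      ≤ 1 / 4 + 1 / (12 * (#Z : ℝ) ^ 2) := by gcongr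
    _ = 1 / 2 * (3 / 4 * (2 / 3) + 1 / 4 * ((2 - 0) ^ 3 / (12 * (#Z : ℝ) ^ 2))) := by ring
    _ ≤ 1 / 2 * (3 / 4 * (∫ x in (0 : ℝ)..2, min x (2 - x) ^ 2)
          + 1 / 4 * ∫ x in (0 : ℝ)..2, Z.inf' hZ fun z => (x - z) ^ 2) := by
        rw [integral_min_sq]
        gcongr
        exact cube_div_le_integral_inf'_sub_sq Z hZ zero_le_two
    _ = 1 / 2 * ∫ x in (0 : ℝ)..2,
          3 / 4 * min x (2 - x) ^ 2 + 1 / 4 * Z.inf' hZ fun z => (x - z) ^ 2 := by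
        rw [integral_add ((hw.intervalIntegrable _ _).const_mul _)
          ((hdZ.intervalIntegrable _ _).const_mul _), integral_const_mul, integral_const_mul]
    _ ≤ distortion α := by
        rw [distortion_eq_integral_inf' hne]
        gcongr
        exact integral_mono_on zero_le_two (Continuous.intervalIntegrable (by fun_prop) _ _)
          ((continuous_inf'_sq_dist α hne).intervalIntegrable _ _) hpt

/-- The lift to `S1 ∪ S2` of the optimal `2k`-point quantizer of `[0, 2]`, whose points are the
midpoints of the `2k` cells `[j / k, (j + 1) / k]`. -/
noncomputable def optimalSet (k : ℕ) : Finset (ℝ × ℝ) :=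
  (range (2 * k)).image fun j : ℕ => liftToSides ((2 * j + 1) / (2 * k : ℝ))

theorem optimalSet_subset (k : ℕ) : ↑(optimalSet k) ⊆ S1 ∪ S2 := by
  intro p hp
  obtain ⟨j, hj, rfl⟩ := mem_image.1 (mem_coe.1 hp)
  have hj : (j : ℝ) + 1 ≤ 2 * k := by exact_mod_cast mem_range.1 hj
  refine liftToSides_mem ⟨by positivity, div_le_of_le_mul₀ (by positivity) zero_le_two ?_⟩
  linarith

theorem card_optimalSet_le (k : ℕ) : #(optimalSet k) ≤ 2 * k :=
  card_image_le.trans (card_range _).le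

theorem optimalSet_nonempty {k : ℕ} (hk : 0 < k) : (optimalSet k).Nonempty :=
  (nonempty_range_iff.2 (by omega)).image _

theorem cell_midpoint_same_half {k j : ℕ} (hk : 0 < k) {x : ℝ}
    (hx : x ∈ Set.Icc ((j : ℝ) / k) (((j + 1 : ℕ) : ℝ) / k)) :
    x ≤ 1 ∧ (2 * j + 1) / (2 * k : ℝ) ≤ 1 ∨ 1 ≤ x ∧ 1 < (2 * j + 1) / (2 * k : ℝ) := by
  have hk' : (0 : ℝ) < k := by exact_mod_cast hk
  push_cast at hx
  rcases lt_or_ge j k with hjk | hjk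
  · have : (j : ℝ) + 1 ≤ k := by exact_mod_cast hjk
    refine Or.inl ⟨hx.2.trans ?_, ?_⟩
    · rw [div_le_one hk']; linarith
    · rw [div_le_one (by positivity)]; linarith
  · have : (k : ℝ) ≤ j := by exact_mod_cast hjk
    refine Or.inr ⟨le_trans ?_ hx.1, ?_⟩
    · rw [le_div_iff₀ hk']; linarith
    · rw [one_lt_div (by positivity)]; linarith

theorem integral_inf'_sq_dist_optimalSet_cell_le {k j : ℕ} (hk : 0 < k) (hj : j < 2 * k) :
    ∫ x in (j : ℝ) / k..((j + 1 : ℕ) : ℝ) / k,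
        (optimalSet k).inf' (optimalSet_nonempty hk) (fun p => (x - p.1) ^ 2 + p.2 ^ 2)
      ≤ 3 / 4 * (∫ x in (j : ℝ) / k..((j + 1 : ℕ) : ℝ) / k, min x (2 - x) ^ 2)
        + 1 / (48 * (k : ℝ) ^ 3) := by
  have hk' : (0 : ℝ) < k := by exact_mod_cast hk
  set z : ℝ := (2 * j + 1) / (2 * k)
  have hz : z = ((j : ℝ) / k + ((j + 1 : ℕ) : ℝ) / k) / 2 := by
    simp only [z]; push_cast; field_simp; ring
  have hle : (j : ℝ) / k ≤ ((j + 1 : ℕ) : ℝ) / k := by gcongr; simp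
  have hmem : liftToSides z ∈ optimalSet k := mem_image_of_mem _ (mem_range.2 hj)
  calc _ ≤ ∫ x in (j : ℝ) / k..((j + 1 : ℕ) : ℝ) / k,
          3 / 4 * min x (2 - x) ^ 2 + 1 / 4 * (x - z) ^ 2 :=
        integral_mono_on hle ((continuous_inf'_sq_dist _ _).intervalIntegrable _ _)
          (Continuous.intervalIntegrable (by fun_prop) _ _) fun x hx =>
          (inf'_le _ hmem).trans (sq_dist_liftToSides (cell_midpoint_same_half hk hx)).le
    _ = 3 / 4 * (∫ x in (j : ℝ) / k..((j + 1 : ℕ) : ℝ) / k, min x (2 - x) ^ 2)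
          + 1 / 4 * ((((j + 1 : ℕ) : ℝ) / k - j / k) ^ 3 / 12) := by
        rw [integral_add (Continuous.intervalIntegrable (by fun_prop) _ _)
          (Continuous.intervalIntegrable (by fun_prop) _ _),
          integral_const_mul, integral_const_mul, hz, integral_sub_midpoint_sq]
    _ = _ := by push_cast; field_simp; ring

theorem distortion_optimalSet_le {k : ℕ} (hk : 0 < k) :
    distortion (optimalSet k) ≤ 1 / 4 + 1 / (48 * (k : ℝ) ^ 2) := by
  have hne := optimalSet_nonempty hk
  set G := fun x : ℝ => (optimalSet k).inf' hne fun p => (x - p.1) ^ 2 + p.2 ^ 2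
  have hG : Continuous G := continuous_inf'_sq_dist _ hne
  have hw : Continuous fun x : ℝ => min x (2 - x) ^ 2 := by fun_prop
  set a : ℕ → ℝ := fun j => j / k
  have ha : a 0 = 0 ∧ a (2 * k) = 2 := by simp [a]; field_simp
  rw [distortion_eq_integral_inf' hne]
  calc 1 / 2 * ∫ x in (0 : ℝ)..2, G x
      = 1 / 2 * ∑ j ∈ range (2 * k), ∫ x in a j..a (j + 1), G x := by
        rw [sum_integral_adjacent_intervals fun _ _ => hG.intervalIntegrable _ _, ha.1, ha.2]
    _ ≤ 1 / 2 * ∑ j ∈ range (2 * k),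
          (3 / 4 * (∫ x in a j..a (j + 1), min x (2 - x) ^ 2) + 1 / (48 * (k : ℝ) ^ 3)) := by
        gcongr with j hj
        exact integral_inf'_sq_dist_optimalSet_cell_le hk (mem_range.1 hj)
    _ = 1 / 2 * (3 / 4 * (2 / 3) + 2 * k * (1 / (48 * (k : ℝ) ^ 3))) := by
        rw [sum_add_distrib, ← mul_sum,
          sum_integral_adjacent_intervals fun _ _ => hw.intervalIntegrable _ _, ha.1, ha.2,
          integral_min_sq, sum_const, card_range, nsmul_eq_mul]
        push_cast
        ring
    _ = 1 / 4 + 1 / (48 * (k : ℝ) ^ 2) := by field_simp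

theorem le_distortion_of_card_le {k : ℕ} {α : Finset (ℝ × ℝ)} (hα : ↑α ⊆ S1 ∪ S2)
    (hne : α.Nonempty) (hcard : #α ≤ 2 * k) : 1 / 4 + 1 / (48 * (k : ℝ) ^ 2) ≤ distortion α := by
  have hpos : (0 : ℝ) < #α := by exact_mod_cast hne.card_pos
  have hle : (#α : ℝ) ≤ 2 * k := by exact_mod_cast hcard
  calc 1 / 4 + 1 / (48 * (k : ℝ) ^ 2) = 1 / 4 + 1 / (12 * (2 * k : ℝ) ^ 2) := by ring
    _ ≤ 1 / 4 + 1 / (12 * (#α : ℝ) ^ 2) := by gcongr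
    _ ≤ distortion α := le_distortion hα hne

theorem V_two_mul {k : ℕ} (hk : 0 < k) : V (2 * k) = 1 / 4 + 1 / (48 * (k : ℝ) ^ 2) := by
  have hne := optimalSet_nonempty hk
  refine IsLeast.csInf_eq ⟨⟨optimalSet k, optimalSet_subset k, hne.card_pos, card_optimalSet_le k,
    (distortion_optimalSet_le hk).antisymm
      (le_distortion_of_card_le (optimalSet_subset k) hne (card_optimalSet_le k)) |>.symm⟩, ?_⟩
  rintro v ⟨α, hα, hpos, hcard, rfl⟩
  exact le_distortion_of_card_le hα (card_pos.1 hpos) hcard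

/-- For even n = 2k with k ≥ 3, Vₙ = (1/48)(12 + 1/k²) = 1/4 + 1/(48k²). -/
theorem stmt16 (k : ℕ) (hk : 3 ≤ k) :
    V (2 * k) = (1/48) * (12 + 1/(k:ℝ)^2) ∧ V (2 * k) = 1/4 + 1/(48 * (k:ℝ)^2) := by
  have hV := V_two_mul (by omega : 0 < k)
  refine ⟨?_, hV⟩
  rw [hV]
  field_simp
  ring
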